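/- arXiv:1907.07317 — 7 statements merged into one kernel-verified Lean document; each statement's English description precedes it below -/
import Mathlib

section
/- Let M ∈ ℝ^{n×n} be positive semidefinite, q ∈ ℝ^n, and for ε > 0 let M^ε be M with εI added to a diagonal block such that z^T (M^ε − M) z = ε ‖λ‖² where z = (y, λ). If z^ε = (y^ε, λ^ε) solves LCP(q, M^ε) and ẑ = (ŷ, λ̂) is any solution of LCP(q, M), then ‖λ^ε‖ ≤ ‖λ̂‖. -/
open Matrix

/-- Block regularization bound: if `M` is positive semidefinite,
`M^ε = M + ε·[[0,0],[0,I]]`, `z^ε = (y^ε, λ^ε)` solves LCP(q, M^ε) and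
`ẑ = (ŷ, λ̂)` solves LCP(q, M), then `‖λ^ε‖ ≤ ‖λ̂‖`. -/
theorem stmt8 (ι κ : Type*) [Fintype ι] [Fintype κ] [DecidableEq κ]
    (M Mε : Matrix (ι ⊕ κ) (ι ⊕ κ) ℝ) (q : ι ⊕ κ → ℝ) (ε : ℝ) (hε : 0 < ε)
    (hpsd : ∀ z : ι ⊕ κ → ℝ, 0 ≤ z ⬝ᵥ M.mulVec z)
    (hMε : Mε = M + ε • Matrix.fromBlocks 0 0 0 1)
    (zε zhat : ι ⊕ κ → ℝ)
    (hzε : 0 ≤ zε ∧ 0 ≤ Mε.mulVec zε + q ∧ zε ⬝ᵥ (Mε.mulVec zε + q) = 0)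
    (hzhat : 0 ≤ zhat ∧ 0 ≤ M.mulVec zhat + q ∧
      zhat ⬝ᵥ (M.mulVec zhat + q) = 0) :
    Real.sqrt (∑ j, (zε (Sum.inr j)) ^ 2) ≤
      Real.sqrt (∑ j, (zhat (Sum.inr j)) ^ 2) := by
  obtain ⟨ha0, haw, hac⟩ := hzε
  obtain ⟨hb0, hbw, hbc⟩ := hzhat
  set a := zε; set b := zhat
  -- cross terms nonneg
  have h3 : 0 ≤ a ⬝ᵥ (M.mulVec b + q) :=
    Finset.sum_nonneg fun i _ => mul_nonneg (ha0 i) (hbw i)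
  have h4 : 0 ≤ b ⬝ᵥ (Mε.mulVec a + q) :=
    Finset.sum_nonneg fun i _ => mul_nonneg (hb0 i) (haw i)
  have hkey : (a - b) ⬝ᵥ (Mε.mulVec a - M.mulVec b) ≤ 0 := by
    have : (a - b) ⬝ᵥ (Mε.mulVec a - M.mulVec b)
        = a ⬝ᵥ (Mε.mulVec a + q) + b ⬝ᵥ (M.mulVec b + q)
          - a ⬝ᵥ (M.mulVec b + q) - b ⬝ᵥ (Mε.mulVec a + q) := by
      simp [sub_dotProduct, dotProduct_sub, dotProduct_add]; ring
    rw [this, hac, hbc]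
    linarith
  have hblock : (a - b) ⬝ᵥ (Matrix.fromBlocks 0 0 0 (1 : Matrix κ κ ℝ)).mulVec a
      = ∑ j, (a (Sum.inr j) - b (Sum.inr j)) * a (Sum.inr j) := by
    simp [dotProduct, mulVec, Fintype.sum_sum_type, Matrix.fromBlocks,
      Matrix.one_apply, Finset.mul_sum]
  have hsplit : (a - b) ⬝ᵥ (Mε.mulVec a - M.mulVec b)
      = (a - b) ⬝ᵥ M.mulVec (a - b)
        + ε * ∑ j, (a (Sum.inr j) - b (Sum.inr j)) * a (Sum.inr j) := by
    rw [hMε, ← hblock]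
    simp [Matrix.add_mulVec, Matrix.smul_mulVec, Matrix.mulVec_sub,
      dotProduct_add, dotProduct_sub, dotProduct_smul, smul_eq_mul]
    ring
  have hpsd' := hpsd (a - b)
  have hsum : ∑ j, (a (Sum.inr j) - b (Sum.inr j)) * a (Sum.inr j) ≤ 0 := by
    nlinarith [hkey, hsplit, hpsd']
  set S := ∑ j, (a (Sum.inr j)) ^ 2 with hS
  set T := ∑ j, (b (Sum.inr j)) ^ 2 with hT
  set P := ∑ j, a (Sum.inr j) * b (Sum.inr j) with hP
  have hSP : S ≤ P := by
    have : S - P ≤ 0 := by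
      rw [hS, hP, ← Finset.sum_sub_distrib]
      refine le_trans (le_of_eq ?_) hsum
      apply Finset.sum_congr rfl; intro j _; ring
    linarith
  have hS0 : 0 ≤ S := Finset.sum_nonneg fun j _ => sq_nonneg _
  have hT0 : 0 ≤ T := Finset.sum_nonneg fun j _ => sq_nonneg _
  have hCS : P ^ 2 ≤ S * T := Finset.sum_mul_sq_le_sq_mul_sq _ _ _
  have hST : S ≤ T := by
    rcases eq_or_lt_of_le hS0 with h0 | h0
    · linarith
    · have hP0 : 0 < P := lt_of_lt_of_le h0 hSP
      nlinarith
  exact Real.sqrt_le_sqrt hST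
end

section
/- In the setting of the componentwise solution classification for the regularized second-stage Cournot LCP, the total supply satisfies T^ε = (γ Σ_{i∈I_3} x_i + εγ Σ_{i∈I_2∪I_3} p_i + Σ_{i∈I_2} p_i) / ((εγ(|I_2| + |I_3| + 1) + |I_2| + 1) γ), where I_2 = {j : γT^ε + λ^ε_j − p_j < 0, y^ε_j ≤ x_j} and I_3 = {j : γT^ε + λ^ε_j − p_j < 0, y^ε_j > x_j}. -/
/-!
On `I₂ ∪ I₃` the gap `γT + λⱼ - pⱼ` is negative, so `yⱼ ≠ 0` and the first complementarity
condition is tight: `γ yⱼ = pⱼ - γT - λⱼ`. On `I₂` the second condition forces `λⱼ = 0`; on `I₃`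
it is tight, `ελⱼ = yⱼ - xⱼ`. Off `I₂ ∪ I₃` the gap is nonnegative and `yⱼ = 0`. Summing these
affine expressions of `yⱼ` in `T` over `I₂` and `I₃` gives a linear equation for `T`.
-/

open Finset

section Component

variable {γ ε T x p y lam : ℝ}

theorem gamma_mul_eq_of_gap_neg (h2 : 0 ≤ γ * y + γ * T + lam - p)
    (h3 : y * (γ * y + γ * T + lam - p) = 0) (hgap : γ * T + lam - p < 0) :
    γ * y = p - γ * T - lam := by
  have hy : y ≠ 0 := by
    rintro rfl
    linarith
  linarith [(mul_eq_zero.mp h3).resolve_left hy]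

theorem eq_zero_of_gap_nonneg (hγ : 0 < γ) (h1 : 0 ≤ y)
    (h3 : y * (γ * y + γ * T + lam - p) = 0) (hgap : 0 ≤ γ * T + lam - p) : y = 0 := by
  rcases mul_eq_zero.mp h3 with hy | htight
  · exact hy
  · have : γ * y ≤ γ * 0 := by linarith
    exact le_antisymm (le_of_mul_le_mul_left this hγ) h1

theorem lam_eq_zero_of_le (hε : 0 < ε) (h4 : 0 ≤ lam)
    (h6 : lam * (x - y + ε * lam) = 0) (hyx : y ≤ x) : lam = 0 := by
  by_contra hne
  have htight := (mul_eq_zero.mp h6).resolve_left hne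
  have : ε * lam ≤ ε * 0 := by linarith
  exact hne (le_antisymm (le_of_mul_le_mul_left this hε) h4)

theorem eps_mul_lam_eq_of_lt (h5 : 0 ≤ x - y + ε * lam)
    (h6 : lam * (x - y + ε * lam) = 0) (hxy : x < y) : ε * lam = y - x := by
  have hne : lam ≠ 0 := by
    rintro rfl
    linarith
  linarith [(mul_eq_zero.mp h6).resolve_left hne]

end Component

theorem total_supply_eq_div {ι : Type*} [Fintype ι] [DecidableEq ι] {γ ε T : ℝ} {x p y : ι → ℝ}
    {I₂ I₃ : Finset ι} (hγ : 0 < γ) (hε : 0 ≤ ε) (hdisj : Disjoint I₂ I₃)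
    (hT : T = ∑ i, y i)
    (hy₂ : ∀ j ∈ I₂, γ * y j = p j - γ * T)
    (hy₃ : ∀ j ∈ I₃, (ε * γ + 1) * y j = ε * (p j - γ * T) + x j)
    (hy₀ : ∀ j, j ∉ I₂ ∪ I₃ → y j = 0) :
    T = (γ * ∑ i ∈ I₃, x i + ε * γ * ∑ i ∈ I₂ ∪ I₃, p i + ∑ i ∈ I₂, p i) /
      ((ε * γ * ((I₂.card : ℝ) + (I₃.card : ℝ) + 1) + (I₂.card : ℝ) + 1) * γ) := by
  have hsplit : T = ∑ i ∈ I₂, y i + ∑ i ∈ I₃, y i := by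
    rw [hT, ← sum_union hdisj]
    exact (sum_subset (subset_univ _) fun j _ hj => hy₀ j hj).symm
  have hsum₂ : γ * ∑ i ∈ I₂, y i = ∑ i ∈ I₂, p i - I₂.card * (γ * T) := by
    rw [mul_sum, sum_congr rfl hy₂, sum_sub_distrib, sum_const, nsmul_eq_mul]
  have hsum₃ : (ε * γ + 1) * ∑ i ∈ I₃, y i =
      ε * ∑ i ∈ I₃, p i - I₃.card * (ε * (γ * T)) + ∑ i ∈ I₃, x i := by
    simp only [mul_sum, sum_congr rfl hy₃, mul_sub, sum_add_distrib, sum_sub_distrib, sum_const,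
      nsmul_eq_mul]
  have hden : 0 < (ε * γ * ((I₂.card : ℝ) + (I₃.card : ℝ) + 1) + (I₂.card : ℝ) + 1) * γ := by
    positivity
  rw [eq_div_iff hden.ne', sum_union hdisj]
  linear_combination (γ * (ε * γ + 1)) * hsplit + (ε * γ + 1) * hsum₂ + γ * hsum₃

theorem stmt10_general (J : ℕ) (γ ε : ℝ) (hγ : 0 < γ) (hε : 0 < ε)
    (x p y lam : Fin J → ℝ)
    (T : ℝ) (hT : T = ∑ i, y i)
    (h1 : ∀ j, 0 ≤ y j)
    (h2 : ∀ j, 0 ≤ γ * y j + γ * T + lam j - p j)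
    (h3 : ∀ j, y j * (γ * y j + γ * T + lam j - p j) = 0)
    (h4 : ∀ j, 0 ≤ lam j)
    (h5 : ∀ j, 0 ≤ x j - y j + ε * lam j)
    (h6 : ∀ j, lam j * (x j - y j + ε * lam j) = 0)
    (I₂ I₃ : Finset (Fin J))
    (hI₂ : I₂ = univ.filter (fun j => γ * T + lam j - p j < 0 ∧ y j ≤ x j))
    (hI₃ : I₃ = univ.filter (fun j => γ * T + lam j - p j < 0 ∧ x j < y j)) :
    T = (γ * ∑ i ∈ I₃, x i + ε * γ * ∑ i ∈ I₂ ∪ I₃, p i + ∑ i ∈ I₂, p i) /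
      ((ε * γ * ((I₂.card : ℝ) + (I₃.card : ℝ) + 1) + (I₂.card : ℝ) + 1) * γ) := by
  subst hI₂ hI₃
  refine total_supply_eq_div hγ hε.le ?_ hT ?_ ?_ ?_
  · exact disjoint_filter.2 fun j _ h₂ h₃ => h₃.2.not_ge h₂.2
  · intro j hj
    obtain ⟨hgap, hyx⟩ := (mem_filter.mp hj).2
    have hlam := lam_eq_zero_of_le hε (h4 j) (h6 j) hyx
    linarith [gamma_mul_eq_of_gap_neg (h2 j) (h3 j) hgap]
  · intro j hj
    obtain ⟨hgap, hxy⟩ := (mem_filter.mp hj).2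
    linear_combination ε * gamma_mul_eq_of_gap_neg (h2 j) (h3 j) hgap -
      eps_mul_lam_eq_of_lt (h5 j) (h6 j) hxy
  · intro j hj
    refine eq_zero_of_gap_nonneg hγ (h1 j) (h3 j) (not_lt.mp fun hgap => hj ?_)
    rcases le_or_gt (y j) (x j) with hyx | hxy
    · exact mem_union_left _ (mem_filter.2 ⟨mem_univ j, hgap, hyx⟩)
    · exact mem_union_right _ (mem_filter.2 ⟨mem_univ j, hgap, hxy⟩)

/-- Closed form of the total supply `T^ε` of the regularized second-stage
Cournot LCP in terms of the index sets `I₂` and `I₃`. -/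
theorem stmt10 (J : ℕ) (hJ : 1 ≤ J) (γ ε : ℝ) (hγ : 0 < γ) (hε : 0 < ε)
    (x p y lam : Fin J → ℝ) (hx : ∀ j, 0 ≤ x j)
    (T : ℝ) (hT : T = ∑ i, y i)
    (h1 : ∀ j, 0 ≤ y j)
    (h2 : ∀ j, 0 ≤ γ * y j + γ * T + lam j - p j)
    (h3 : ∀ j, y j * (γ * y j + γ * T + lam j - p j) = 0)
    (h4 : ∀ j, 0 ≤ lam j)
    (h5 : ∀ j, 0 ≤ x j - y j + ε * lam j)
    (h6 : ∀ j, lam j * (x j - y j + ε * lam j) = 0)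
    (I₂ I₃ : Finset (Fin J))
    (hI₂ : I₂ = univ.filter (fun j => γ * T + lam j - p j < 0 ∧ y j ≤ x j))
    (hI₃ : I₃ = univ.filter (fun j => γ * T + lam j - p j < 0 ∧ x j < y j)) :
    T = (γ * ∑ i ∈ I₃, x i + ε * γ * ∑ i ∈ I₂ ∪ I₃, p i + ∑ i ∈ I₂, p i) /
      ((ε * γ * ((I₂.card : ℝ) + (I₃.card : ℝ) + 1) + (I₂.card : ℝ) + 1) * γ) :=
  stmt10_general J γ ε hγ hε x p y lam T hT h1 h2 h3 h4 h5 h6 I₂ I₃ hI₂ hI₃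
end

section
/- Let J ≥ 1, γ > 0, x ∈ ℝ^J_+, p ∈ ℝ^J, and let (ȳ, λ̄) be the least ℓ_2-norm solution of the second-stage LCP 0 ≤ ȳ_j ⊥ γ ȳ_j + γT̄ + λ̄_j − p_j ≥ 0, 0 ≤ λ̄_j ⊥ x_j − ȳ_j ≥ 0 (T̄ = Σ_i ȳ_i). Then for each j, the pair (ȳ_j, λ̄_j) is one of: (0, 0), (−(γT̄ − p_j)/γ, 0), or (x_j, −γ(T̄ + x_j) + p_j). -/
/-- Classification of the least `ℓ₂`-norm solution of the second-stage
Cournot LCP: each component `(ȳ_j, λ̄_j)` is `(0,0)`, `(-(γT̄ - p_j)/γ, 0)`,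
or `(x_j, -γ(T̄ + x_j) + p_j)`. -/
theorem stmt14 (J : ℕ) (hJ : 1 ≤ J) (γ : ℝ) (hγ : 0 < γ)
    (x p y lam : Fin J → ℝ) (hx : ∀ j, 0 ≤ x j)
    (T : ℝ) (hT : T = ∑ i, y i)
    (h1 : ∀ j, 0 ≤ y j)
    (h2 : ∀ j, 0 ≤ γ * y j + γ * T + lam j - p j)
    (h3 : ∀ j, y j * (γ * y j + γ * T + lam j - p j) = 0)
    (h4 : ∀ j, 0 ≤ lam j)
    (h5 : ∀ j, 0 ≤ x j - y j)
    (h6 : ∀ j, lam j * (x j - y j) = 0)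
    (hleast : ∀ y' lam' : Fin J → ℝ,
      ((∀ j, 0 ≤ y' j) ∧
       (∀ j, 0 ≤ γ * y' j + γ * (∑ i, y' i) + lam' j - p j) ∧
       (∀ j, y' j * (γ * y' j + γ * (∑ i, y' i) + lam' j - p j) = 0) ∧
       (∀ j, 0 ≤ lam' j) ∧ (∀ j, 0 ≤ x j - y' j) ∧
       (∀ j, lam' j * (x j - y' j) = 0)) →
      Real.sqrt ((∑ j, (y j) ^ 2) + ∑ j, (lam j) ^ 2) ≤
        Real.sqrt ((∑ j, (y' j) ^ 2) + ∑ j, (lam' j) ^ 2)) :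
    ∀ j, (y j = 0 ∧ lam j = 0) ∨
      (y j = -((γ * T - p j) / γ) ∧ lam j = 0) ∨
      (y j = x j ∧ lam j = -(γ * (T + x j)) + p j) := by
  intro j
  by_cases hy0 : y j = 0
  · by_cases hl0 : lam j = 0
    · exact Or.inl ⟨hy0, hl0⟩
    · -- y j = 0, lam j > 0: then x j = 0 and least-norm forces lam j = p j - γT
      have hlpos : 0 < lam j := lt_of_le_of_ne (h4 j) (Ne.symm hl0)
      have hxj : x j = 0 := by
        have h := h6 j
        rw [hy0] at h
        rcases mul_eq_zero.1 h with h' | h'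
        · exact absurd h' hl0
        · linarith
      set m : ℝ := max 0 (p j - γ * T) with hm
      set lam' : Fin J → ℝ := Function.update lam j m with hlam'
      have hfeas : ((∀ k, 0 ≤ y k) ∧
          (∀ k, 0 ≤ γ * y k + γ * (∑ i, y i) + lam' k - p k) ∧
          (∀ k, y k * (γ * y k + γ * (∑ i, y i) + lam' k - p k) = 0) ∧
          (∀ k, 0 ≤ lam' k) ∧ (∀ k, 0 ≤ x k - y k) ∧
          (∀ k, lam' k * (x k - y k) = 0)) := by
        refine ⟨h1, ?_, ?_, ?_, h5, ?_⟩
        · intro k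
          by_cases hk : k = j
          · subst hk
            rw [hlam', Function.update_self, hy0, ← hT]
            have : p k - γ * T ≤ m := le_max_right _ _
            linarith
          · rw [hlam', Function.update_of_ne hk, ← hT]
            exact h2 k
        · intro k
          by_cases hk : k = j
          · subst hk; rw [hy0]; ring
          · rw [hlam', Function.update_of_ne hk, ← hT]
            exact h3 k
        · intro k
          by_cases hk : k = j
          · subst hk; rw [hlam', Function.update_self]; exact le_max_left _ _
          · rw [hlam', Function.update_of_ne hk]; exact h4 k
        · intro k
          by_cases hk : k = j
          · subst hk; rw [hxj, hy0]; ring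
          · rw [hlam', Function.update_of_ne hk]; exact h6 k
      have hle := hleast y lam' hfeas
      have hsum : ((∑ k, (y k) ^ 2) + ∑ k, (lam k) ^ 2) ≤
          ((∑ k, (y k) ^ 2) + ∑ k, (lam' k) ^ 2) :=
        (Real.sqrt_le_sqrt_iff (by positivity)).1 hle
      have hsplit : (∑ k, (lam' k) ^ 2) =
          (∑ k ∈ Finset.univ.erase j, (lam k) ^ 2) + m ^ 2 := by
        rw [← Finset.sum_erase_add _ _ (Finset.mem_univ j)]
        rw [hlam', Function.update_self]
        congr 1
        apply Finset.sum_congr rfl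
        intro k hk
        rw [Function.update_of_ne (Finset.ne_of_mem_erase hk)]
      have hsplit2 : (∑ k, (lam k) ^ 2) =
          (∑ k ∈ Finset.univ.erase j, (lam k) ^ 2) + (lam j) ^ 2 := by
        rw [← Finset.sum_erase_add _ _ (Finset.mem_univ j)]
      have hsq : (lam j) ^ 2 ≤ m ^ 2 := by
        rw [hsplit] at hsum; rw [hsplit2] at hsum; linarith
      have hmnn : 0 ≤ m := le_max_left _ _
      have hlm : lam j ≤ m := by nlinarith
      have hge : p j - γ * T ≤ lam j := by
        have := h2 j; rw [hy0] at this; linarith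
      by_cases hp : p j - γ * T ≤ 0
      · have : m = 0 := max_eq_left (by linarith)
        exact absurd (le_antisymm (this ▸ hlm) (h4 j)) hl0
      · have hmeq : m = p j - γ * T := max_eq_right (by linarith)
        refine Or.inr (Or.inr ⟨by rw [hy0, hxj], ?_⟩)
        rw [hxj]
        have : lam j = p j - γ * T := le_antisymm (hmeq ▸ hlm) hge
        linarith
  · -- y j > 0
    have hyp : 0 < y j := lt_of_le_of_ne (h1 j) (Ne.symm hy0)
    have heq : γ * y j + γ * T + lam j - p j = 0 := by
      rcases mul_eq_zero.1 (h3 j) with h | h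
      · exact absurd h hy0
      · exact h
    by_cases hl0 : lam j = 0
    · refine Or.inr (Or.inl ⟨?_, hl0⟩)
      rw [hl0] at heq
      field_simp
      linarith
    · have hxy : x j = y j := by
        rcases mul_eq_zero.1 (h6 j) with h | h
        · exact absurd h hl0
        · linarith
      refine Or.inr (Or.inr ⟨hxy.symm, ?_⟩)
      rw [← hxy] at heq
      linarith
end

section
/- Let γ > 0, x ∈ ℝ^J_+, p ∈ ℝ^J, ε ∈ (0,1]. Let (y^ε, λ^ε) be the unique solution of the regularized second-stage LCP and (ȳ, λ̄) the least ℓ_2-norm solution of the unregularized one (same γ, x, p). Then ‖λ^ε − λ̄‖ ≤ κ̄ ε with κ̄ = 3√J (γ² ‖x‖_1 + γ ‖p‖_1). -/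
set_option maxHeartbeats 2000000 in
/-- Error bound for the multiplier: `‖λ^ε − λ̄‖ ≤ 3√J (γ²‖x‖₁ + γ‖p‖₁) ε`,
where `(y^ε, λ^ε)` solves the regularized second-stage Cournot LCP and
`(ȳ, λ̄)` is the least `ℓ₂`-norm solution of the unregularized one. -/
theorem stmt15 (J : ℕ) (hJ : 1 ≤ J) (γ ε : ℝ) (hγ : 0 < γ)
    (hε : ε ∈ Set.Ioc (0 : ℝ) 1)
    (x p yε lamε ybar lambar : Fin J → ℝ) (hx : ∀ j, 0 ≤ x j)
    (Tε : ℝ) (hTε : Tε = ∑ i, yε i)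
    -- (yε, lamε) solves the regularized second-stage LCP
    (hε1 : ∀ j, 0 ≤ yε j)
    (hε2 : ∀ j, 0 ≤ γ * yε j + γ * Tε + lamε j - p j)
    (hε3 : ∀ j, yε j * (γ * yε j + γ * Tε + lamε j - p j) = 0)
    (hε4 : ∀ j, 0 ≤ lamε j)
    (hε5 : ∀ j, 0 ≤ x j - yε j + ε * lamε j)
    (hε6 : ∀ j, lamε j * (x j - yε j + ε * lamε j) = 0)
    (Tbar : ℝ) (hTbar : Tbar = ∑ i, ybar i)
    -- (ybar, lambar) solves the unregularized second-stage LCP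
    (hb1 : ∀ j, 0 ≤ ybar j)
    (hb2 : ∀ j, 0 ≤ γ * ybar j + γ * Tbar + lambar j - p j)
    (hb3 : ∀ j, ybar j * (γ * ybar j + γ * Tbar + lambar j - p j) = 0)
    (hb4 : ∀ j, 0 ≤ lambar j)
    (hb5 : ∀ j, 0 ≤ x j - ybar j)
    (hb6 : ∀ j, lambar j * (x j - ybar j) = 0)
    -- and it is the least ℓ₂-norm solution
    (hleast : ∀ y' lam' : Fin J → ℝ,
      ((∀ j, 0 ≤ y' j) ∧
       (∀ j, 0 ≤ γ * y' j + γ * (∑ i, y' i) + lam' j - p j) ∧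
       (∀ j, y' j * (γ * y' j + γ * (∑ i, y' i) + lam' j - p j) = 0) ∧
       (∀ j, 0 ≤ lam' j) ∧ (∀ j, 0 ≤ x j - y' j) ∧
       (∀ j, lam' j * (x j - y' j) = 0)) →
      Real.sqrt ((∑ j, (ybar j) ^ 2) + ∑ j, (lambar j) ^ 2) ≤
        Real.sqrt ((∑ j, (y' j) ^ 2) + ∑ j, (lam' j) ^ 2)) :
    Real.sqrt (∑ j, (lamε j - lambar j) ^ 2) ≤
      3 * Real.sqrt J * (γ ^ 2 * (∑ i, |x i|) + γ * ∑ i, |p i|) * ε := by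
  obtain ⟨hε0, hεle1⟩ := hε
  have hγε : (0:ℝ) < 1 + γ * ε := by nlinarith
  have hγεnn : (0:ℝ) ≤ γ * ε := mul_nonneg hγ.le hε0.le
  set P : ℝ := ∑ i, |p i| with hP
  set X : ℝ := ∑ i, |x i| with hX
  have hPnn : 0 ≤ P := Finset.sum_nonneg fun i _ => abs_nonneg _
  have hXnn : 0 ≤ X := Finset.sum_nonneg fun i _ => abs_nonneg _
  have hpP : ∀ j, |p j| ≤ P := fun j =>
    Finset.single_le_sum (fun i (_ : i ∈ Finset.univ) => abs_nonneg (p i)) (Finset.mem_univ j)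
  have hyx : ∀ j, ybar j ≤ x j := fun j => by have := hb5 j; linarith
  have hTε0 : (0:ℝ) ≤ Tε := hTε ▸ Finset.sum_nonneg fun i _ => hε1 i
  have hTb0 : (0:ℝ) ≤ Tbar := hTbar ▸ Finset.sum_nonneg fun i _ => hb1 i
  -- closed form for lamε
  have hlamε : ∀ j, lamε j * (1 + γ * ε) = max 0 (p j - γ * Tε - γ * x j) := by
    intro j
    rcases eq_or_lt_of_le (hε4 j) with h0 | hpos
    · have h5 := hε5 j; have h2 := hε2 j
      have hle : p j - γ * Tε - γ * x j ≤ 0 := by nlinarith [hε1 j]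
      rw [← h0, max_eq_left hle]; ring
    · have h6 := hε6 j
      have hy : x j - yε j + ε * lamε j = 0 := by
        rcases mul_eq_zero.mp h6 with h | h
        · linarith
        · exact h
      have hyεj : yε j = x j + ε * lamε j := by linarith
      have hypos : 0 < yε j := by nlinarith [hx j]
      have heq : γ * yε j + γ * Tε + lamε j - p j = 0 := by
        rcases mul_eq_zero.mp (hε3 j) with h | h
        · linarith
        · exact h
      have key : lamε j * (1 + γ * ε) = p j - γ * Tε - γ * x j := by
        linear_combination heq - γ * hyεj
      rw [key, max_eq_right]
      nlinarith
  -- closed form for yε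
  have hyεf : ∀ j, γ * yε j = max 0 (min (p j - γ * Tε) (γ * x j)) + γ * (ε * lamε j) := by
    intro j
    rcases eq_or_lt_of_le (hε4 j) with h0 | hpos
    · rcases eq_or_lt_of_le (hε1 j) with hy0 | hy
      · have h2 := hε2 j
        have hmin : min (p j - γ * Tε) (γ * x j) ≤ 0 :=
          le_trans (min_le_left _ _) (by nlinarith)
        rw [← h0, ← hy0, max_eq_left hmin]; ring
      · have heq : γ * yε j + γ * Tε + lamε j - p j = 0 := by
          rcases mul_eq_zero.mp (hε3 j) with h | h
          · linarith
          · exact h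
        have h5 := hε5 j
        have h1 : p j - γ * Tε = γ * yε j := by linarith
        have hmin : min (p j - γ * Tε) (γ * x j) = p j - γ * Tε :=
          min_eq_left (by nlinarith)
        rw [hmin, max_eq_right (by nlinarith), ← h0]; linarith
    · have h6 := hε6 j
      have hy : x j - yε j + ε * lamε j = 0 := by
        rcases mul_eq_zero.mp h6 with h | h
        · linarith
        · exact h
      have hyεj : yε j = x j + ε * lamε j := by linarith
      have hypos : 0 < yε j := by nlinarith [hx j]
      have heq : γ * yε j + γ * Tε + lamε j - p j = 0 := by
        rcases mul_eq_zero.mp (hε3 j) with h | h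
        · linarith
        · exact h
      have hq : p j - γ * Tε = γ * x j + (1 + γ * ε) * lamε j := by
        linear_combination -heq + γ * hyεj
      have hmin : min (p j - γ * Tε) (γ * x j) = γ * x j :=
        min_eq_right (by nlinarith)
      have hxg : (0:ℝ) ≤ γ * x j := mul_nonneg hγ.le (hx j)
      rw [hmin, max_eq_right hxg, hyεj]; ring
  -- closed form for ybar
  have hybf : ∀ j, γ * ybar j = max 0 (min (p j - γ * Tbar) (γ * x j)) := by
    intro j
    rcases eq_or_lt_of_le (hb4 j) with h0 | hpos
    · rcases eq_or_lt_of_le (hb1 j) with hy0 | hy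
      · have h2 := hb2 j
        have hmin : min (p j - γ * Tbar) (γ * x j) ≤ 0 :=
          le_trans (min_le_left _ _) (by nlinarith)
        rw [← hy0, max_eq_left hmin]; ring
      · have heq : γ * ybar j + γ * Tbar + lambar j - p j = 0 := by
          rcases mul_eq_zero.mp (hb3 j) with h | h
          · linarith
          · exact h
        have h1 : p j - γ * Tbar = γ * ybar j := by linarith
        have hmin : min (p j - γ * Tbar) (γ * x j) = p j - γ * Tbar :=
          min_eq_left (by nlinarith [hyx j])
        rw [hmin, max_eq_right (by nlinarith)]; linarith
    · have hxy : x j - ybar j = 0 := by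
        rcases mul_eq_zero.mp (hb6 j) with h | h
        · linarith
        · exact h
      have hxe : ybar j = x j := by linarith
      rcases eq_or_lt_of_le (hb1 j) with hy0 | hy
      · have hx0 : x j = 0 := by rw [← hxe, ← hy0]
        have hmin : min (p j - γ * Tbar) (γ * x j) ≤ 0 := by
          rw [hx0]; simpa using min_le_right _ 0
        rw [← hy0, max_eq_left hmin]; ring
      · have heq : γ * ybar j + γ * Tbar + lambar j - p j = 0 := by
          rcases mul_eq_zero.mp (hb3 j) with h | h
          · linarith
          · exact h
        have hq : p j - γ * Tbar = γ * x j + lambar j := by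
          rw [← hxe]; linarith
        have hmin : min (p j - γ * Tbar) (γ * x j) = γ * x j :=
          min_eq_right (by nlinarith)
        rw [hmin, max_eq_right (mul_nonneg hγ.le (hx j)), ← hxe]
  -- lambar dominates the candidate multiplier
  have hlb_ge : ∀ j, max 0 (p j - γ * Tbar - γ * x j) ≤ lambar j := by
    intro j
    refine max_le (hb4 j) ?_
    have h2 := hb2 j
    have := mul_le_mul_of_nonneg_left (hyx j) hγ.le
    linarith
  -- lambar j = 0 whenever ybar j < x j
  have hzero : ∀ j, ybar j < x j → lambar j = 0 := by
    intro j hlt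
    rcases mul_eq_zero.mp (hb6 j) with h | h
    · exact h
    · linarith
  -- least-norm gives the closed form for lambar
  have hlbar : ∀ j, lambar j = max 0 (p j - γ * Tbar - γ * x j) := by
    set lam' : Fin J → ℝ := fun j => max 0 (p j - γ * Tbar - γ * x j) with hlam'
    have hle' : ∀ j, lam' j ≤ lambar j := hlb_ge
    have hnn' : ∀ j, 0 ≤ lam' j := fun j => le_max_left _ _
    have hsol := hleast ybar lam' ?_
    · -- from norms: lambar = lam'
      have hA : (0:ℝ) ≤ (∑ j, (ybar j) ^ 2) + ∑ j, (lambar j) ^ 2 := by positivity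
      have hsum_le : (∑ j, (ybar j) ^ 2) + ∑ j, (lambar j) ^ 2 ≤
          (∑ j, (ybar j) ^ 2) + ∑ j, (lam' j) ^ 2 := by
        have hB : (0:ℝ) ≤ (∑ j, (ybar j) ^ 2) + ∑ j, (lam' j) ^ 2 := by positivity
        nlinarith [Real.sq_sqrt hA, Real.sq_sqrt hB, Real.sqrt_nonneg
          ((∑ j, (ybar j) ^ 2) + ∑ j, (lambar j) ^ 2),
          Real.sqrt_nonneg ((∑ j, (ybar j) ^ 2) + ∑ j, (lam' j) ^ 2)]
      have hsum2 : ∑ j, (lambar j) ^ 2 ≤ ∑ j, (lam' j) ^ 2 := by linarith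
      have hterm : ∀ j ∈ Finset.univ, (lam' j) ^ 2 ≤ (lambar j) ^ 2 := by
        intro j _
        have := hle' j; have := hnn' j; nlinarith
      have hsum3 : ∑ j, (lam' j) ^ 2 ≤ ∑ j, (lambar j) ^ 2 := Finset.sum_le_sum hterm
      have hzero_sum : ∑ j, ((lambar j) ^ 2 - (lam' j) ^ 2) = 0 := by
        rw [Finset.sum_sub_distrib]; linarith
      have hnonneg : ∀ j ∈ Finset.univ, (0:ℝ) ≤ (lambar j) ^ 2 - (lam' j) ^ 2 := by
        intro j _
        have := hle' j
        have := hnn' j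
        nlinarith
      have hcomp0 := (Finset.sum_eq_zero_iff_of_nonneg hnonneg).mp hzero_sum
      intro j
      have hj := hcomp0 j (Finset.mem_univ j)
      have h1 := hle' j; have h2 := hnn' j
      have : lambar j = lam' j := by nlinarith
      exact this
    · refine ⟨hb1, ?_, ?_, hnn', hb5, ?_⟩
      · intro j
        rw [← hTbar]
        rcases lt_or_eq_of_le (hyx j) with hlt | heqx
        · have h0 := hzero j hlt
          have h0' : lam' j = 0 := le_antisymm (h0 ▸ hle' j) (hnn' j)
          have := hb2 j
          rw [h0] at this
          rw [h0']; linarith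
        · have hlr : p j - γ * Tbar - γ * x j ≤ lam' j := le_max_right _ _
          rw [heqx]
          linarith
      · intro j
        rw [← hTbar]
        rcases eq_or_lt_of_le (hb1 j) with hy0 | hy
        · rw [← hy0]; ring
        · have heq : γ * ybar j + γ * Tbar + lambar j - p j = 0 := by
            rcases mul_eq_zero.mp (hb3 j) with h | h
            · linarith
            · exact h
          have hll : lam' j = lambar j := by
            rcases lt_or_eq_of_le (hyx j) with hlt | heqx
            · have h0 := hzero j hlt
              have h0' : lam' j = 0 := le_antisymm (h0 ▸ hle' j) (hnn' j)
              rw [h0, h0']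
            · have : lambar j = p j - γ * Tbar - γ * x j := by
                rw [← heqx]; linarith
              simp only [hlam']
              rw [← this, max_eq_right (hb4 j)]
          rw [hll]
          have : γ * ybar j + γ * Tbar + lambar j - p j = 0 := heq
          rw [this, mul_zero]
      · intro j
        rcases lt_or_eq_of_le (hyx j) with hlt | heqx
        · have h0 := hzero j hlt
          have h0' : lam' j = 0 := le_antisymm (h0 ▸ hle' j) (hnn' j)
          rw [h0', zero_mul]
        · rw [← heqx, sub_self, mul_zero]
  -- Tbar ≤ Tε
  have hTle : Tbar ≤ Tε := by
    by_contra hcon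
    push_neg at hcon
    have hyle : ∀ j, ybar j ≤ yε j := by
      intro j
      have h1 := hybf j
      have h2 := hyεf j
      have hmono : max 0 (min (p j - γ * Tbar) (γ * x j)) ≤
          max 0 (min (p j - γ * Tε) (γ * x j)) :=
        max_le_max le_rfl (min_le_min (by nlinarith) le_rfl)
      have hnn : 0 ≤ γ * (ε * lamε j) :=
        mul_nonneg hγ.le (mul_nonneg hε0.le (hε4 j))
      nlinarith
    have : Tbar ≤ Tε := by
      rw [hTε, hTbar]
      exact Finset.sum_le_sum fun i _ => hyle i
    linarith
  -- lamε j ≤ |p j|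
  have hlub : ∀ j, lamε j ≤ |p j| := by
    intro j
    have h := hlamε j
    have ha : max 0 (p j - γ * Tε - γ * x j) ≤ |p j| :=
      max_le (abs_nonneg _) (by nlinarith [le_abs_self (p j), hx j])
    nlinarith [mul_nonneg (hε4 j) hγεnn]
  have hlubP : ∀ j, lamε j ≤ P := fun j => le_trans (hlub j) (hpP j)
  -- Tε ≤ Tbar + ε * P
  have hTub : Tε ≤ Tbar + ε * P := by
    have key : ∀ j, γ * yε j ≤ γ * ybar j + γ * ε * |p j| := by
      intro j
      have h1 := hybf j
      have h2 := hyεf j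
      have hmono : max 0 (min (p j - γ * Tε) (γ * x j)) ≤
          max 0 (min (p j - γ * Tbar) (γ * x j)) :=
        max_le_max le_rfl (min_le_min (by nlinarith) le_rfl)
      have := mul_le_mul_of_nonneg_left
        (mul_le_mul_of_nonneg_left (hlub j) hε0.le) hγ.le
      linarith
    have hsumB : ∑ i, (γ * ybar i + γ * ε * |p i|) = γ * Tbar + γ * ε * P := by
      rw [hTbar, hP, Finset.mul_sum, Finset.mul_sum, Finset.sum_add_distrib]
    have hsumA : ∑ i, (γ * yε i) = γ * Tε := by rw [hTε, Finset.mul_sum]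
    have hsum : γ * Tε ≤ γ * Tbar + γ * ε * P := by
      rw [← hsumA, ← hsumB]
      exact Finset.sum_le_sum fun i _ => key i
    nlinarith
  -- componentwise bound
  have hcomp : ∀ j, |lamε j - lambar j| ≤ 2 * γ * ε * P := by
    intro j
    have hA := hlamε j
    have hB := hlbar j
    set a := p j - γ * Tε - γ * x j with haa
    set b := p j - γ * Tbar - γ * x j with hbb
    have hab : a ≤ b := by
      have : 0 ≤ γ * (Tε - Tbar) := mul_nonneg hγ.le (by linarith)
      simp only [haa, hbb]; nlinarith
    have hba : b - a ≤ γ * ε * P := by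
      have h1 : b - a = γ * (Tε - Tbar) := by simp only [haa, hbb]; ring
      have h2 : Tε - Tbar ≤ ε * P := by linarith
      rw [h1]
      calc γ * (Tε - Tbar) ≤ γ * (ε * P) := mul_le_mul_of_nonneg_left h2 hγ.le
        _ = γ * ε * P := by ring
    have hAB : max 0 a ≤ max 0 b := max_le_max le_rfl hab
    have hBA : max 0 b ≤ max 0 a + (b - a) := by
      rcases le_total b 0 with h | h
      · rw [max_eq_left h]
        have := le_max_left 0 a
        linarith
      · rw [max_eq_right h]
        have := le_max_right 0 a
        linarith
    have haP : max 0 a ≤ P := by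
      refine max_le hPnn ?_
      have := hpP j
      have := le_abs_self (p j)
      simp only [haa]
      nlinarith [hx j]
    have hl1 : lamε j ≤ lambar j := by
      have h1 : lamε j ≤ max 0 a := by nlinarith [mul_nonneg (hε4 j) hγεnn]
      rw [hB]; exact le_trans h1 hAB
    have hl2 : lambar j - lamε j ≤ 2 * γ * ε * P := by
      have h1 : lamε j = max 0 a - γ * ε * lamε j := by nlinarith
      have h2 : γ * ε * lamε j ≤ γ * ε * P := mul_le_mul_of_nonneg_left (hlubP j) hγεnn
      rw [hB]
      linarith
    rw [abs_sub_comm, abs_of_nonneg (by linarith)]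
    linarith
  -- assemble
  have hC : (0:ℝ) ≤ 2 * γ * ε * P := by positivity
  have hsumsq : ∑ j, (lamε j - lambar j) ^ 2 ≤ (J : ℝ) * (2 * γ * ε * P) ^ 2 := by
    calc ∑ j, (lamε j - lambar j) ^ 2 ≤ ∑ _j : Fin J, (2 * γ * ε * P) ^ 2 := by
          refine Finset.sum_le_sum fun j _ => ?_
          have h := hcomp j
          nlinarith [abs_nonneg (lamε j - lambar j), sq_abs (lamε j - lambar j)]
      _ = (J : ℝ) * (2 * γ * ε * P) ^ 2 := by
          rw [Finset.sum_const, Finset.card_univ, Fintype.card_fin, nsmul_eq_mul]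
  have h1 : Real.sqrt (∑ j, (lamε j - lambar j) ^ 2) ≤
      Real.sqrt ((J : ℝ) * (2 * γ * ε * P) ^ 2) := Real.sqrt_le_sqrt hsumsq
  have h2 : Real.sqrt ((J : ℝ) * (2 * γ * ε * P) ^ 2) =
      Real.sqrt J * (2 * γ * ε * P) := by
    rw [Real.sqrt_mul (Nat.cast_nonneg J), Real.sqrt_sq hC]
  have hJnn : (0:ℝ) ≤ Real.sqrt J := Real.sqrt_nonneg _
  have hfin : Real.sqrt J * (2 * γ * ε * P) ≤
      3 * Real.sqrt J * (γ ^ 2 * X + γ * P) * ε := by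
    nlinarith [mul_nonneg (mul_nonneg hJnn hε0.le) (mul_nonneg hγ.le hPnn),
      mul_nonneg (mul_nonneg hJnn hε0.le) (mul_nonneg (mul_nonneg hγ.le hγ.le) hXnn)]
  calc Real.sqrt (∑ j, (lamε j - lambar j) ^ 2)
      ≤ Real.sqrt ((J : ℝ) * (2 * γ * ε * P) ^ 2) := h1
    _ = Real.sqrt J * (2 * γ * ε * P) := h2
    _ ≤ 3 * Real.sqrt J * (γ ^ 2 * X + γ * P) * ε := hfin
end

section
/- Let γ > 0, x ∈ ℝ^J_+, p ∈ ℝ^J, ε > 0, and let (y^ε, λ^ε) solve the regularized second-stage LCP with total supply T^ε and (ȳ, λ̄) the least-norm solution with total supply T̄. Then T^ε − T̄ ≥ 0 and T^ε − T̄ ≤ (‖p‖_1 + γ ‖x‖_1) ε. -/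
/-- Total-supply comparison: `0 ≤ T^ε − T̄ ≤ (‖p‖₁ + γ‖x‖₁) ε`, where
`(y^ε, λ^ε)` solves the regularized second-stage Cournot LCP and
`(ȳ, λ̄)` is the least-norm solution of the unregularized one. -/
theorem stmt16 (J : ℕ) (hJ : 1 ≤ J) (γ ε : ℝ) (hγ : 0 < γ)
    (hε : 0 < ε)
    (x p yε lamε ybar lambar : Fin J → ℝ) (hx : ∀ j, 0 ≤ x j)
    (Tε : ℝ) (hTε : Tε = ∑ i, yε i)
    -- (yε, lamε) solves the regularized second-stage LCP
    (hε1 : ∀ j, 0 ≤ yε j)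
    (hε2 : ∀ j, 0 ≤ γ * yε j + γ * Tε + lamε j - p j)
    (hε3 : ∀ j, yε j * (γ * yε j + γ * Tε + lamε j - p j) = 0)
    (hε4 : ∀ j, 0 ≤ lamε j)
    (hε5 : ∀ j, 0 ≤ x j - yε j + ε * lamε j)
    (hε6 : ∀ j, lamε j * (x j - yε j + ε * lamε j) = 0)
    (Tbar : ℝ) (hTbar : Tbar = ∑ i, ybar i)
    -- (ybar, lambar) solves the unregularized second-stage LCP
    (hb1 : ∀ j, 0 ≤ ybar j)
    (hb2 : ∀ j, 0 ≤ γ * ybar j + γ * Tbar + lambar j - p j)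
    (hb3 : ∀ j, ybar j * (γ * ybar j + γ * Tbar + lambar j - p j) = 0)
    (hb4 : ∀ j, 0 ≤ lambar j)
    (hb5 : ∀ j, 0 ≤ x j - ybar j)
    (hb6 : ∀ j, lambar j * (x j - ybar j) = 0)
    -- and it is the least ℓ₂-norm solution
    (hleast : ∀ y' lam' : Fin J → ℝ,
      ((∀ j, 0 ≤ y' j) ∧
       (∀ j, 0 ≤ γ * y' j + γ * (∑ i, y' i) + lam' j - p j) ∧
       (∀ j, y' j * (γ * y' j + γ * (∑ i, y' i) + lam' j - p j) = 0) ∧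
       (∀ j, 0 ≤ lam' j) ∧ (∀ j, 0 ≤ x j - y' j) ∧
       (∀ j, lam' j * (x j - y' j) = 0)) →
      Real.sqrt ((∑ j, (ybar j) ^ 2) + ∑ j, (lambar j) ^ 2) ≤
        Real.sqrt ((∑ j, (y' j) ^ 2) + ∑ j, (lam' j) ^ 2)) :
    0 ≤ Tε - Tbar ∧ Tε - Tbar ≤ ((∑ i, |p i|) + γ * ∑ i, |x i|) * ε := by
  have hTε0 : 0 ≤ Tε := by
    rw [hTε]; exact Finset.sum_nonneg fun i _ => hε1 i
  have key : 0 ≤ Tε - Tbar := by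
    by_contra h
    push_neg at h
    have hall : ∀ j, ybar j ≤ yε j := by
      intro j
      by_contra hj
      push_neg at hj
      have hybpos : 0 < ybar j := lt_of_le_of_lt (hε1 j) hj
      have hxy : yε j < x j := lt_of_lt_of_le hj (by linarith [hb5 j])
      have hlam0 : lamε j = 0 := by
        rcases mul_eq_zero.mp (hε6 j) with h0 | h0
        · exact h0
        · nlinarith [hε4 j]
      have heq : γ * ybar j + γ * Tbar + lambar j - p j = 0 := by
        rcases mul_eq_zero.mp (hb3 j) with h0 | h0
        · exact absurd h0 (ne_of_gt hybpos)
        · exact h0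
      have h2 := hε2 j
      nlinarith [hb4 j]
    have hTT : Tbar ≤ Tε := by
      rw [hTε, hTbar]; exact Finset.sum_le_sum fun i _ => hall i
    linarith
  refine ⟨key, ?_⟩
  have hkey2 : ∀ j, yε j - ybar j ≤ ε * |p j| := by
    intro j
    have hεabs : 0 ≤ ε * |p j| := mul_nonneg hε.le (abs_nonneg _)
    rcases eq_or_lt_of_le (hε1 j) with h0 | hpos
    · have := hb1 j; linarith [h0.symm ▸ (le_refl (yε j))]
    · have heq : γ * yε j + γ * Tε + lamε j - p j = 0 := by
        rcases mul_eq_zero.mp (hε3 j) with h0 | h0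
        · exact absurd h0 (ne_of_gt hpos)
        · exact h0
      rcases eq_or_lt_of_le (hε4 j) with hl0 | hlpos
      · -- lamε j = 0: show yε j ≤ ybar j
        have h5 := hε5 j
        have hyx : yε j ≤ x j := by nlinarith [hl0.symm ▸ h5]
        have hby : yε j ≤ ybar j := by
          by_contra hc
          push_neg at hc
          have hlb0 : lambar j = 0 := by
            rcases mul_eq_zero.mp (hb6 j) with h0 | h0
            · exact h0
            · nlinarith [hb4 j]
          have h2 := hb2 j
          nlinarith
        linarith
      · -- lamε j > 0
        have hyeq : x j - yε j + ε * lamε j = 0 := by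
          rcases mul_eq_zero.mp (hε6 j) with h0 | h0
          · exact absurd h0 (ne_of_gt hlpos)
          · exact h0
        have hlam_le : lamε j ≤ |p j| := by
          have := le_abs_self (p j)
          nlinarith [hε1 j]
        have hbx : x j ≤ ybar j := by
          by_contra hc
          push_neg at hc
          have hlb0 : lambar j = 0 := by
            rcases mul_eq_zero.mp (hb6 j) with h0 | h0
            · exact h0
            · nlinarith [hb4 j]
          have h2 := hb2 j
          have hyx : x j < yε j := by nlinarith [mul_pos hε hlpos]
          nlinarith [mul_lt_mul_of_pos_left hc hγ, mul_lt_mul_of_pos_left hyx hγ,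
            mul_nonneg hγ.le key]
        have := mul_le_mul_of_nonneg_left hlam_le hε.le
        linarith
  have hsum : Tε - Tbar = ∑ j, (yε j - ybar j) := by
    rw [hTε, hTbar, Finset.sum_sub_distrib]
  have hb : ∑ j, (yε j - ybar j) ≤ ∑ j, ε * |p j| :=
    Finset.sum_le_sum fun j _ => hkey2 j
  have hxsum : 0 ≤ ∑ i, |x i| := Finset.sum_nonneg fun i _ => abs_nonneg _
  have : ∑ j, ε * |p j| = ε * ∑ j, |p j| := by rw [Finset.mul_sum]
  nlinarith [mul_nonneg (mul_nonneg hγ.le hxsum) hε.le]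
end

section
/- Suppose there exists p_0 > 0 with p_j ≤ p_0 for all j and all scenarios, c_j > 0 and a_j > 0 for all j. Let x^ε ∈ ℝ^J_+ be the first-stage part of the unique solution of the regularized two-stage SCP: 0 ≤ x^ε ⊥ Cx^ε − E[λ^ε(ξ)] + a ≥ 0 together with the regularized second-stage conditions. Then the family {x^ε : ε ∈ (0,1]} is bounded. -/
open MeasureTheory

/-- Boundedness of the first-stage solutions of the regularized two-stage
stochastic Cournot–Nash complementarity problem: if the risk-adjusted prices
are a.s. bounded above by `p₀ > 0` and `γ(ξ) ≥ γ₀ > 0` a.s., then the family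
`{x^ε : ε ∈ (0,1]}` is bounded. -/
theorem stmt17 (J : ℕ) (hJ : 1 ≤ J)
    (Ω : Type*) [MeasurableSpace Ω] (μ : Measure Ω) [IsProbabilityMeasure μ]
    (γ : Ω → ℝ) (p : Ω → Fin J → ℝ) (γ₀ p₀ : ℝ) (hγ₀ : 0 < γ₀) (hp₀ : 0 < p₀)
    (hγ : ∀ᵐ ω ∂μ, γ₀ ≤ γ ω) (hp : ∀ j, ∀ᵐ ω ∂μ, p ω j ≤ p₀)
    (c a : Fin J → ℝ) (hc : ∀ j, 0 < c j) (ha : ∀ j, 0 < a j)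
    -- the solution family: first-stage x, second-stage responses y and
    -- multipliers λ, indexed by the regularization parameter ε
    (X : ℝ → Fin J → ℝ) (Y Λ : ℝ → Ω → Fin J → ℝ)
    (hint : ∀ ε ∈ Set.Ioc (0 : ℝ) 1, ∀ j, Integrable (fun ω => Λ ε ω j) μ)
    -- first-stage complementarity: 0 ≤ x ⊥ Cx − E[λ(ξ)] + a ≥ 0
    (hfs : ∀ ε ∈ Set.Ioc (0 : ℝ) 1, ∀ j,
      0 ≤ X ε j ∧
      0 ≤ c j * X ε j - (∫ ω, Λ ε ω j ∂μ) + a j ∧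
      X ε j * (c j * X ε j - (∫ ω, Λ ε ω j ∂μ) + a j) = 0)
    -- regularized second-stage complementarity, a.s.
    (hss : ∀ ε ∈ Set.Ioc (0 : ℝ) 1, ∀ᵐ ω ∂μ, ∀ j,
      0 ≤ Y ε ω j ∧
      0 ≤ γ ω * Y ε ω j + γ ω * (∑ i, Y ε ω i) + Λ ε ω j - p ω j ∧
      Y ε ω j * (γ ω * Y ε ω j + γ ω * (∑ i, Y ε ω i) + Λ ε ω j - p ω j) = 0 ∧
      0 ≤ Λ ε ω j ∧
      0 ≤ X ε j - Y ε ω j + ε * Λ ε ω j ∧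
      Λ ε ω j * (X ε j - Y ε ω j + ε * Λ ε ω j) = 0) :
    ∃ R : ℝ, ∀ ε ∈ Set.Ioc (0 : ℝ) 1, ∀ j, X ε j ≤ R := by
  refine ⟨p₀ / γ₀, fun ε hε j => ?_⟩
  by_contra hgt
  push_neg at hgt
  have hα : 0 < p₀ / γ₀ := div_pos hp₀ hγ₀
  have hx0 : 0 < X ε j := lt_trans hα hgt
  have hΛ0 : ∀ᵐ ω ∂μ, Λ ε ω j = 0 := by
    filter_upwards [hγ, hp j, hss ε hε] with ω hγω hpω hssω
    obtain ⟨hY, hpos, hcomp, hΛ, hxy, hΛcomp⟩ := hssω j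
    by_contra hne
    have hΛpos : 0 < Λ ε ω j := lt_of_le_of_ne hΛ (Ne.symm hne)
    have hzero : X ε j - Y ε ω j + ε * Λ ε ω j = 0 := by
      rcases mul_eq_zero.mp hΛcomp with h | h
      · exact absurd h hne
      · exact h
    have hεΛ : 0 < ε * Λ ε ω j := mul_pos hε.1 hΛpos
    have hYgt : p₀ / γ₀ < Y ε ω j := by linarith
    have hYpos : 0 < Y ε ω j := lt_trans hα hYgt
    have hsum : 0 ≤ ∑ i, Y ε ω i := Finset.sum_nonneg fun i _ => (hssω i).1
    have hγpos : 0 < γ ω := lt_of_lt_of_le hγ₀ hγω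
    have h1 : p ω j < γ ω * Y ε ω j := by
      have h0 : p₀ < γ₀ * Y ε ω j := (div_lt_iff₀ hγ₀).mp hYgt |>.trans_eq (mul_comm _ _)
      have h2 : γ₀ * Y ε ω j ≤ γ ω * Y ε ω j :=
        mul_le_mul_of_nonneg_right hγω hYpos.le
      linarith
    have h2 : 0 < γ ω * Y ε ω j + γ ω * (∑ i, Y ε ω i) + Λ ε ω j - p ω j := by
      have := mul_nonneg hγpos.le hsum
      linarith
    nlinarith [mul_pos hYpos h2]
  have hint0 : ∫ ω, Λ ε ω j ∂μ = 0 := by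
    rw [integral_congr_ae hΛ0]
    simp
  obtain ⟨h1, h2, h3⟩ := hfs ε hε j
  rw [hint0] at h3
  nlinarith [hc j, ha j, mul_pos (hc j) hx0]
end

section
/- Let A ∈ ℝ^{n×n} be a P-matrix (all principal minors positive) and let D̃ = diag(d_1,...,d_n) with 0 ≤ d_j ≤ 1 for all j. Then the matrix I − D̃(I − A) is nonsingular. Conversely, if I − D̃(I − A) is nonsingular for every such diagonal matrix D̃, then A is a P-matrix. -/
open Matrix

private lemma det_aux (n : ℕ) (A : Matrix (Fin n) (Fin n) ℝ) (S : Finset (Fin n)) :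
    Matrix.det (Matrix.of fun i j =>
        if i ∈ S then A i j else (1 : Matrix (Fin n) (Fin n) ℝ) i j)
      = Matrix.det (Matrix.of fun (i : S) (j : S) => A i j) := by
  classical
  set B : Matrix (Fin n) (Fin n) ℝ := Matrix.of fun i j =>
      if i ∈ S then A i j else (1 : Matrix (Fin n) (Fin n) ℝ) i j with hB
  let e : {x // x ∈ S} ⊕ {x // ¬ x ∈ S} ≃ Fin n := Equiv.sumCompl (· ∈ S)
  have h1 : B.submatrix e e = Matrix.fromBlocks
      (Matrix.of fun (i : S) (j : S) => A i j)
      (Matrix.of fun (i : S) (j : {x // ¬ x ∈ S}) => A i j)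
      0 1 := by
    ext i j
    cases i with
    | inl i =>
      cases j with
      | inl j => simp [hB, e, i.2]
      | inr j => simp [hB, e, i.2]
    | inr i =>
      cases j with
      | inl j =>
        have : (i : Fin n) ≠ (j : Fin n) := fun h => i.2 (h ▸ j.2)
        simp [hB, e, i.2, Matrix.one_apply, this]
      | inr j =>
        simp [hB, e, i.2, Matrix.one_apply, Subtype.ext_iff]
  calc B.det = (B.submatrix e e).det := (Matrix.det_submatrix_equiv_self e B).symm
    _ = Matrix.det (Matrix.of fun (i : S) (j : S) => A i j) := by
        rw [h1, Matrix.det_fromBlocks_zero₂₁, Matrix.det_one, mul_one]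

private lemma det_expand (n : ℕ) (A : Matrix (Fin n) (Fin n) ℝ) (d : Fin n → ℝ) :
    (1 - Matrix.diagonal d * (1 - A)).det
      = ∑ S : Finset (Fin n), (∏ i ∈ S, d i) * (∏ i ∈ Sᶜ, (1 - d i)) *
          Matrix.det (Matrix.of fun (i : S) (j : S) => A i j) := by
  classical
  set r : Fin n → Fin n → ℝ := fun i => d i • A i with hr
  set r' : Fin n → Fin n → ℝ := fun i => (1 - d i) • (1 : Matrix (Fin n) (Fin n) ℝ) i with hr'
  have hM : (1 - Matrix.diagonal d * (1 - A)) = Matrix.of (r + r') := by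
    ext i j
    simp [hr, hr', Matrix.sub_apply, Matrix.diagonal_mul, Matrix.one_apply]
    split_ifs <;> ring
  have hdet : (1 - Matrix.diagonal d * (1 - A)).det
      = (Matrix.detRowAlternating (R := ℝ) (n := Fin n)).toMultilinearMap (r + r') := by
    rw [hM]; rfl
  rw [hdet, MultilinearMap.map_add_univ]
  apply Finset.sum_congr rfl
  intro S _
  set f := (Matrix.detRowAlternating (R := ℝ) (n := Fin n)).toMultilinearMap with hf
  set m2 : Fin n → Fin n → ℝ := fun i =>
      if i ∈ S then A i else (1 : Matrix (Fin n) (Fin n) ℝ) i with hm2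
  set m1 : Fin n → Fin n → ℝ := fun i =>
      if i ∈ S then A i else (1 - d i) • (1 : Matrix (Fin n) (Fin n) ℝ) i with hm1
  have e1 : S.piecewise r r' = S.piecewise (fun i => d i • m1 i) m1 := by
    funext i
    by_cases hi : i ∈ S <;> simp [Finset.piecewise, hi, hm1, hr, hr']
  have e2 : m1 = Sᶜ.piecewise (fun i => (1 - d i) • m2 i) m2 := by
    funext i
    by_cases hi : i ∈ S <;> simp [Finset.piecewise, hi, hm1, hm2]
  have s1 : f (S.piecewise r r') = (∏ i ∈ S, d i) • f m1 := by
    rw [e1, f.map_piecewise_smul d m1 S]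
  have s2 : f m1 = (∏ i ∈ Sᶜ, (1 - d i)) • f m2 := by
    rw [e2, f.map_piecewise_smul (fun i => 1 - d i) m2 Sᶜ]
  have s3 : f m2 = Matrix.det (Matrix.of fun (i : S) (j : S) => A i j) := by
    have hof : (Matrix.of m2) = Matrix.of fun i j =>
        if i ∈ S then A i j else (1 : Matrix (Fin n) (Fin n) ℝ) i j := by
      ext i j
      by_cases hi : i ∈ S <;> simp [hm2, hi]
    rw [← det_aux n A S, ← hof]
    rfl
  rw [s1, s2, s3, smul_eq_mul, smul_eq_mul, mul_assoc]

/-- Gabriel–Moré nonsingularity characterization: `A` is a P-matrix (all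
principal minors positive) iff `I − D̃(I − A)` is nonsingular for every
diagonal `D̃` with entries in `[0, 1]`. -/
theorem stmt19 (n : ℕ) (A : Matrix (Fin n) (Fin n) ℝ) :
    (∀ S : Finset (Fin n), S.Nonempty →
        0 < Matrix.det (Matrix.of fun (i : S) (j : S) => A i j)) ↔
    (∀ d : Fin n → ℝ, (∀ j, d j ∈ Set.Icc (0 : ℝ) 1) →
        (1 - Matrix.diagonal d * (1 - A)).det ≠ 0) := by
  classical
  constructor
  · intro h d hd
    rw [det_expand]
    have hdetpos : ∀ S : Finset (Fin n),
        0 < Matrix.det (Matrix.of fun (i : S) (j : S) => A i j) := by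
      intro S
      rcases S.eq_empty_or_nonempty with hS | hS
      · subst hS
        haveI : IsEmpty (↥(∅ : Finset (Fin n))) := Finset.isEmpty_coe_sort.mpr rfl
        rw [Matrix.det_isEmpty]; norm_num
      · exact h S hS
    have hc0 : ∀ S : Finset (Fin n), 0 ≤ (∏ i ∈ S, d i) * (∏ i ∈ Sᶜ, (1 - d i)) := by
      intro S
      apply mul_nonneg
      · exact Finset.prod_nonneg fun i _ => (hd i).1
      · exact Finset.prod_nonneg fun i _ => by linarith [(hd i).2]
    have hsum : ∑ S : Finset (Fin n), (∏ i ∈ S, d i) * (∏ i ∈ Sᶜ, (1 - d i)) = 1 := by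
      rw [← Fintype.prod_add d (fun i => 1 - d i)]
      simp
    have hex : ∃ S ∈ (Finset.univ : Finset (Finset (Fin n))),
        (0 : ℝ) < (∏ i ∈ S, d i) * (∏ i ∈ Sᶜ, (1 - d i)) := by
      by_contra hcon
      push_neg at hcon
      have : ∑ S : Finset (Fin n), (∏ i ∈ S, d i) * (∏ i ∈ Sᶜ, (1 - d i)) ≤ 0 :=
        Finset.sum_nonpos fun S hS => hcon S hS
      rw [hsum] at this; linarith
    obtain ⟨S₀, _, hS₀⟩ := hex
    apply ne_of_gt
    apply Finset.sum_pos'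
    · intro S _
      exact mul_nonneg (hc0 S) (le_of_lt (hdetpos S))
    · exact ⟨S₀, Finset.mem_univ S₀, mul_pos hS₀ (hdetpos S₀)⟩
  · intro h S hS
    by_contra hle
    push_neg at hle
    set g : ℝ → ℝ := fun t =>
      (1 - Matrix.diagonal (fun i => if i ∈ S then t else 0) * (1 - A)).det with hg
    have hcont : Continuous g := by
      apply Continuous.matrix_det
      apply continuous_matrix
      intro i j
      simp only [Matrix.sub_apply, Matrix.diagonal_mul]
      by_cases hi : i ∈ S <;> simp [hi] <;> fun_prop
    have hg0 : g 0 = 1 := by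
      simp [hg]
    have hg1 : g 1 = Matrix.det (Matrix.of fun (i : S) (j : S) => A i j) := by
      have hmat : (1 - Matrix.diagonal (fun i => if i ∈ S then (1:ℝ) else 0) * (1 - A))
          = Matrix.of fun i j =>
              if i ∈ S then A i j else (1 : Matrix (Fin n) (Fin n) ℝ) i j := by
        ext i j
        by_cases hi : i ∈ S <;>
          simp [hi, Matrix.sub_apply, Matrix.diagonal_mul, Matrix.one_apply]
      rw [hg]
      simp only [hmat]
      rw [det_aux]
    have hmem : (0 : ℝ) ∈ Set.Icc (g 1) (g 0) := by
      constructor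
      · rw [hg1]; exact hle
      · rw [hg0]; norm_num
    obtain ⟨t, ht, hgt⟩ := intermediate_value_Icc' (by norm_num : (0:ℝ) ≤ 1)
      (hcont.continuousOn) hmem
    refine h (fun i => if i ∈ S then t else 0) ?_ hgt
    intro j
    by_cases hj : j ∈ S <;> simp [hj]
    · exact ht
end
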